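/- Let A ∈ M_n with numerical range W(A) contained in a sector S_α for some α ∈ [0, π/2), and let f : [0,∞) → [0,∞) be a concave function. Then for every unitarily invariant norm ‖·‖, one has ‖f(Re A)‖ ≤ ‖f(|A|)‖. -/

import Mathlib

open Matrix Set ComplexOrder

variable {m : Type*}

/-- The modulus `|X| = (XᴴX)^{1/2}` of a matrix. -/
noncomputable def matAbs [Fintype m] [DecidableEq m] (X : Matrix m m ℂ) : Matrix m m ℂ :=
  (Matrix.posSemidef_conjTranspose_mul_self X).1.eigenvectorUnitary.1 *
    diagonal ((↑) ∘ Real.sqrt ∘ (Matrix.posSemidef_conjTranspose_mul_self X).1.eigenvalues) *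
    (star (Matrix.posSemidef_conjTranspose_mul_self X).1.eigenvectorUnitary : Matrix m m ℂ)

theorem matAbs_posSemidef [Fintype m] [DecidableEq m] (X : Matrix m m ℂ) :
    (matAbs X).PosSemidef := by
  unfold matAbs
  have hD : (diagonal ((↑) ∘ Real.sqrt ∘
      (Matrix.posSemidef_conjTranspose_mul_self X).1.eigenvalues) : Matrix m m ℂ).PosSemidef := by
    refine Matrix.posSemidef_diagonal_iff.mpr fun i => ?_
    simp only [Function.comp_apply]
    exact_mod_cast Real.sqrt_nonneg _
  simpa [Matrix.star_eq_conjTranspose] using hD.mul_mul_conjTranspose_same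
    ((Matrix.posSemidef_conjTranspose_mul_self X).1.eigenvectorUnitary : Matrix m m ℂ)

/-- Functional calculus: apply `f : ℝ → ℝ` to a Hermitian matrix via its spectral
decomposition (junk value `0` for non-Hermitian input). -/
noncomputable def matFun [Fintype m] [DecidableEq m] (f : ℝ → ℝ) (X : Matrix m m ℂ) :
    Matrix m m ℂ :=
  if h : X.IsHermitian then
    (h.eigenvectorUnitary : Matrix m m ℂ) *
      Matrix.diagonal (fun i => (f (h.eigenvalues i) : ℂ)) *
      star (h.eigenvectorUnitary : Matrix m m ℂ)
  else 0

/-- Real part `Re A = (A + Aᴴ)/2`. -/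
noncomputable def reM (A : Matrix m m ℂ) : Matrix m m ℂ := (1/2 : ℂ) • (A + Aᴴ)

/-- Imaginary part `Im A = (A - Aᴴ)/(2i)`. -/
noncomputable def imM (A : Matrix m m ℂ) : Matrix m m ℂ := (1/(2*Complex.I)) • (A - Aᴴ)

/-- Numerical range `W(A) = {x* A x : x*x = 1}`. -/
def numRange [Fintype m] (A : Matrix m m ℂ) : Set ℂ :=
  {z | ∃ x : m → ℂ, star x ⬝ᵥ x = 1 ∧ z = star x ⬝ᵥ A.mulVec x}

/-- The sector `S_α = {z : Re z ≥ 0, |Im z| ≤ (Re z) tan α}`. -/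
def sector (α : ℝ) : Set ℂ := {z | 0 ≤ z.re ∧ |z.im| ≤ z.re * Real.tan α}

/-! Since `W(A)` lies in the closed right half-plane, `Re A ≥ 0`. Order the eigenvalues
increasingly. By a dimension count, the eigenvectors of `Re A` for its `n - k` largest eigenvalues
and those of `|A|` for its `k + 1` smallest span subspaces with a common unit vector `x`, and then
`λₖ(Re A) ≤ Re ⟨x, A x⟩ ≤ ‖A x‖ = ‖|A| x‖ ≤ λₖ(|A|)` (Fan–Hoffman). A nonnegative concave function
on `[0, ∞)` is nondecreasing, so `f(λₖ(Re A)) ≤ f(λₖ(|A|))`, and a unitarily invariant norm is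
monotone on nonnegative diagonal matrices: `diag(t) D` with `|t| ≤ 1` is the average of two unitary
multiples of `D`. -/

theorem ConcaveOn.monotoneOn_of_nonneg {f : ℝ → ℝ} (hf : ConcaveOn ℝ (Ici 0) f)
    (hf0 : ∀ x, 0 ≤ x → 0 ≤ f x) : MonotoneOn f (Ici 0) := by
  intro a (ha : 0 ≤ a) b (hb : 0 ≤ b) hab
  rcases hab.eq_or_lt with rfl | hab
  · rfl
  by_contra! hfab
  -- the chord through `a` and `b` is negative at `z`, and concavity puts `f z` below the chord
  set z := b + 1 + b * f a / (f a - f b) with hz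
  have hδ : 0 < f a - f b := sub_pos.mpr hfab
  have hbz : b < z := by
    have : 0 ≤ b * f a / (f a - f b) := div_nonneg (mul_nonneg hb (hf0 a ha)) hδ.le
    linarith
  have hz0 : 0 ≤ z := hb.trans hbz.le
  have hsec := hf.neg.secant_mono_aux1 ha hz0 hab hbz
  have hzδ : z * (f a - f b) = (b + 1) * (f a - f b) + b * f a := by
    rw [hz]; field_simp
  simp only [Pi.neg_apply] at hsec
  nlinarith [mul_nonneg ha (hf0 b hb), mul_nonneg (sub_nonneg.mpr hab.le) (hf0 z hz0),
    mul_pos (by linarith : (0 : ℝ) < b + 1) hδ]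

theorem diagonal_mem_unitaryGroup [Fintype m] [DecidableEq m] {w : m → ℂ}
    (hw : ∀ i, ‖w i‖ = 1) : diagonal w ∈ unitaryGroup m ℂ := by
  rw [mem_unitaryGroup_iff', star_eq_conjTranspose, diagonal_conjTranspose, diagonal_mul_diagonal,
    ← diagonal_one]
  congr 1; funext i
  simp [Complex.conj_mul', hw]

def IsUnitarilyInvariant [Fintype m] [DecidableEq m] (N : Matrix m m ℂ → ℝ) : Prop :=
  ∀ X, ∀ U ∈ unitaryGroup m ℂ, ∀ V ∈ unitaryGroup m ℂ, N (U * X * V) = N X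

namespace IsUnitarilyInvariant

variable [Fintype m] [DecidableEq m] {N : Matrix m m ℂ → ℝ}

theorem conj (hN : IsUnitarilyInvariant N) {U : Matrix m m ℂ} (hU : U ∈ unitaryGroup m ℂ)
    (X : Matrix m m ℂ) : N (U * X * star U) = N X :=
  hN X U hU (star U) (Unitary.star_mem hU)

theorem diagonal_comp_perm (hN : IsUnitarilyInvariant N) (σ : Equiv.Perm m) (d : m → ℂ) :
    N (diagonal (d ∘ σ)) = N (diagonal d) := by
  have hP : σ.permMatrix ℂ ∈ unitaryGroup m ℂ := by
    rw [mem_unitaryGroup_iff, star_eq_conjTranspose, conjTranspose_permMatrix, ← permMatrix_mul]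
    simp
  have hconj : σ.permMatrix ℂ * diagonal d * star (σ.permMatrix ℂ) = diagonal (d ∘ σ) := by
    rw [star_eq_conjTranspose, conjTranspose_permMatrix, PEquiv.toMatrix_toPEquiv_mul,
      PEquiv.mul_toMatrix_toPEquiv, submatrix_submatrix, Equiv.Perm.inv_def, Equiv.symm_symm]
    exact submatrix_diagonal_equiv d σ
  rw [← hconj, hN.conj hP]

theorem diagonal_mul_le (hN : IsUnitarilyInvariant N) (hadd : ∀ X Y, N (X + Y) ≤ N X + N Y)
    (hsmul : ∀ (c : ℂ) X, N (c • X) = ‖c‖ * N X) {t : m → ℝ} (ht : ∀ i, |t i| ≤ 1) (d : m → ℂ) :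
    N (diagonal fun i => (t i : ℂ) * d i) ≤ N (diagonal d) := by
  -- `t i` is the real part of the unimodular `w i`, so `diag t` is the mean of two unitaries
  set w : m → ℂ := fun i => Complex.exp (Real.arccos (t i) * Complex.I)
  have hw : ∀ i, ‖w i‖ = 1 := fun i => Complex.norm_exp_ofReal_mul_I _
  have hwt : ∀ i, (t i : ℂ) = (w i + star (w i)) / 2 := fun i => by
    rw [Complex.star_def, Complex.add_conj, Complex.exp_ofReal_mul_I_re,
      Real.cos_arccos (abs_le.mp (ht i)).1 (abs_le.mp (ht i)).2]
    push_cast; ring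
  have hsplit : diagonal (fun i => (t i : ℂ) * d i)
      = (1 / 2 : ℂ) • (diagonal w * diagonal d)
        + (1 / 2 : ℂ) • (diagonal (star w) * diagonal d) := by
    rw [diagonal_mul_diagonal, diagonal_mul_diagonal, ← diagonal_smul, ← diagonal_smul,
      diagonal_add]
    congr 1; funext i
    simp only [hwt, Pi.smul_apply, Pi.star_apply, smul_eq_mul]
    ring
  have hstar : ∀ i, ‖star w i‖ = 1 := fun i => by simp [hw]
  calc N (diagonal fun i => (t i : ℂ) * d i)
      ≤ ‖(1 / 2 : ℂ)‖ * N (diagonal w * diagonal d)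
        + ‖(1 / 2 : ℂ)‖ * N (diagonal (star w) * diagonal d) := by
        rw [hsplit, ← hsmul, ← hsmul]; exact hadd _ _
    _ = N (diagonal d) := by
        rw [← mul_one (diagonal w * diagonal d), ← mul_one (diagonal (star w) * diagonal d),
          hN _ _ (diagonal_mem_unitaryGroup hw) _ (one_mem _),
          hN _ _ (diagonal_mem_unitaryGroup hstar) _ (one_mem _)]
        norm_num; ring

theorem diagonal_mono (hN : IsUnitarilyInvariant N) (hadd : ∀ X Y, N (X + Y) ≤ N X + N Y)
    (hsmul : ∀ (c : ℂ) X, N (c • X) = ‖c‖ * N X) {c d : m → ℝ} (hc : ∀ i, 0 ≤ c i)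
    (hcd : ∀ i, c i ≤ d i) :
    N (diagonal fun i => (c i : ℂ)) ≤ N (diagonal fun i => (d i : ℂ)) := by
  have hct : ∀ i, c i = c i / d i * d i := fun i => by
    rcases eq_or_ne (d i) 0 with hd | hd
    · rw [hd, mul_zero]; exact le_antisymm (hd ▸ hcd i) (hc i)
    · rw [div_mul_cancel₀ _ hd]
  have ht : ∀ i, |c i / d i| ≤ 1 := fun i =>
    abs_le.mpr ⟨by linarith [div_nonneg (hc i) ((hc i).trans (hcd i))],
      div_le_one_of_le₀ (hcd i) ((hc i).trans (hcd i))⟩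
  convert hN.diagonal_mul_le hadd hsmul ht _ using 4 with i
  rw [← Complex.ofReal_mul, ← hct]

end IsUnitarilyInvariant


section EuclideanNorm

variable [Fintype m]

theorem dotProduct_star_self_eq_norm_sq (x : m → ℂ) :
    star x ⬝ᵥ x = ((‖WithLp.toLp 2 x‖ ^ 2 : ℝ) : ℂ) := by
  rw [dotProduct_comm, ← EuclideanSpace.inner_toLp_toLp, inner_self_eq_norm_sq_to_K]
  push_cast; rfl

theorem re_dotProduct_le_norm_mul_norm (x y : m → ℂ) :
    (star x ⬝ᵥ y).re ≤ ‖WithLp.toLp 2 x‖ * ‖WithLp.toLp 2 y‖ := by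
  rw [dotProduct_comm, ← EuclideanSpace.inner_toLp_toLp]
  exact re_inner_le_norm (𝕜 := ℂ) _ _

theorem star_mulVec_dotProduct_mulVec (M : Matrix m m ℂ) (x y : m → ℂ) :
    star (M *ᵥ x) ⬝ᵥ (M *ᵥ y) = star x ⬝ᵥ (Mᴴ * M) *ᵥ y := by
  rw [star_mulVec, ← dotProduct_mulVec, mulVec_mulVec]

theorem norm_mulVec_eq_of_conjTranspose_mul_self_eq {M M' : Matrix m m ℂ}
    (h : Mᴴ * M = M'ᴴ * M') (x : m → ℂ) : ‖WithLp.toLp 2 (M *ᵥ x)‖ = ‖WithLp.toLp 2 (M' *ᵥ x)‖ := by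
  have hsq := star_mulVec_dotProduct_mulVec M x x
  rw [h, ← star_mulVec_dotProduct_mulVec, dotProduct_star_self_eq_norm_sq,
    dotProduct_star_self_eq_norm_sq, Complex.ofReal_inj] at hsq
  exact (pow_left_inj₀ (norm_nonneg _) (norm_nonneg _) two_ne_zero).mp hsq

variable [DecidableEq m]

theorem dotProduct_mulVec_mulVec_of_mem_unitaryGroup {W : Matrix m m ℂ}
    (hW : W ∈ unitaryGroup m ℂ) (x y : m → ℂ) :
    star (W *ᵥ x) ⬝ᵥ (W *ᵥ y) = star x ⬝ᵥ y := by
  rw [star_mulVec_dotProduct_mulVec, ← star_eq_conjTranspose, mem_unitaryGroup_iff'.mp hW,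
    one_mulVec]

theorem norm_mulVec_of_mem_unitaryGroup {W : Matrix m m ℂ} (hW : W ∈ unitaryGroup m ℂ)
    (x : m → ℂ) : ‖WithLp.toLp 2 (W *ᵥ x)‖ = ‖WithLp.toLp 2 x‖ := by
  rw [norm_mulVec_eq_of_conjTranspose_mul_self_eq (M' := 1), one_mulVec]
  rw [← star_eq_conjTranspose, mem_unitaryGroup_iff'.mp hW, conjTranspose_one, Matrix.mul_one]

end EuclideanNorm

namespace Matrix.IsHermitian

variable [Fintype m] [DecidableEq m] {H : Matrix m m ℂ} (hH : H.IsHermitian)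

theorem star_eigenvectorUnitary_mulVec_mulVec (x : m → ℂ) (i : m) :
    (star (hH.eigenvectorUnitary : Matrix m m ℂ) *ᵥ (H *ᵥ x)) i
      = hH.eigenvalues i * (star (hH.eigenvectorUnitary : Matrix m m ℂ) *ᵥ x) i := by
  set U := (hH.eigenvectorUnitary : Matrix m m ℂ)
  have hdiag : star U * H * U = diagonal (RCLike.ofReal ∘ hH.eigenvalues) := by
    rw [← Unitary.conjStarAlgAut_star_apply (S := ℂ)]
    exact hH.conjStarAlgAut_star_eigenvectorUnitary
  have hcomm : star U * H = diagonal (RCLike.ofReal ∘ hH.eigenvalues) * star U := by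
    rw [← hdiag, Matrix.mul_assoc _ U, mem_unitaryGroup_iff.mp hH.eigenvectorUnitary.2,
      Matrix.mul_one]
  rw [mulVec_mulVec, hcomm, ← mulVec_mulVec, mulVec_diagonal]
  rfl

theorem norm_sq_eq_sum (x : m → ℂ) :
    ‖WithLp.toLp 2 x‖ ^ 2 = ∑ i, ‖(star (hH.eigenvectorUnitary : Matrix m m ℂ) *ᵥ x) i‖ ^ 2 := by
  rw [← norm_mulVec_of_mem_unitaryGroup (star hH.eigenvectorUnitary).2,
    EuclideanSpace.norm_sq_eq]
  rfl

theorem re_dotProduct_mulVec_eq_sum (x : m → ℂ) :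
    (star x ⬝ᵥ H *ᵥ x).re
      = ∑ i, hH.eigenvalues i * ‖(star (hH.eigenvectorUnitary : Matrix m m ℂ) *ᵥ x) i‖ ^ 2 := by
  rw [← dotProduct_mulVec_mulVec_of_mem_unitaryGroup (star hH.eigenvectorUnitary).2,
    dotProduct, Complex.re_sum]
  refine Finset.sum_congr rfl fun i _ => ?_
  rw [Unitary.coe_star, star_eigenvectorUnitary_mulVec_mulVec, Pi.star_apply, mul_left_comm,
    Complex.star_def, Complex.conj_mul', ← Complex.ofReal_pow, ← Complex.ofReal_mul,
    Complex.ofReal_re]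

theorem mul_norm_sq_le_re_dotProduct {c : ℝ} {x : m → ℂ}
    (hx : ∀ i, hH.eigenvalues i < c → (star (hH.eigenvectorUnitary : Matrix m m ℂ) *ᵥ x) i = 0) :
    c * ‖WithLp.toLp 2 x‖ ^ 2 ≤ (star x ⬝ᵥ H *ᵥ x).re := by
  rw [hH.norm_sq_eq_sum, hH.re_dotProduct_mulVec_eq_sum, Finset.mul_sum]
  refine Finset.sum_le_sum fun i _ => ?_
  by_cases hi : hH.eigenvalues i < c
  · simp [hx i hi]
  · exact mul_le_mul_of_nonneg_right (not_lt.mp hi) (sq_nonneg _)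

theorem norm_mulVec_le {c : ℝ} (hc : 0 ≤ c) {x : m → ℂ}
    (hx : ∀ i, c < |hH.eigenvalues i| → (star (hH.eigenvectorUnitary : Matrix m m ℂ) *ᵥ x) i = 0) :
    ‖WithLp.toLp 2 (H *ᵥ x)‖ ≤ c * ‖WithLp.toLp 2 x‖ := by
  refine (pow_le_pow_iff_left₀ (norm_nonneg _) (by positivity) two_ne_zero).mp ?_
  rw [mul_pow, hH.norm_sq_eq_sum, hH.norm_sq_eq_sum x, Finset.mul_sum]
  refine Finset.sum_le_sum fun i _ => ?_
  by_cases hi : c < |hH.eigenvalues i|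
  · simp [star_eigenvectorUnitary_mulVec_mulVec, hx i hi]
  · rw [star_eigenvectorUnitary_mulVec_mulVec, norm_mul, mul_pow, Complex.norm_real,
      Real.norm_eq_abs]
    gcongr
    exact not_lt.mp hi

end Matrix.IsHermitian

theorem exists_ne_zero_forall_eq_zero {K V ι : Type*} [Field K] [AddCommGroup V] [Module K V]
    [FiniteDimensional K V] [Fintype ι] (φ : ι → V →ₗ[K] K)
    (hcard : Fintype.card ι < Module.finrank K V) : ∃ x ≠ 0, ∀ i, φ i x = 0 := by
  obtain ⟨x, hx, hx0⟩ := Submodule.exists_mem_ne_zero_of_ne_bot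
    (LinearMap.ker_ne_bot_of_finrank_lt (f := LinearMap.pi φ) (by simpa using hcard))
  exact ⟨x, hx0, fun i => congrFun (LinearMap.mem_ker.mp hx) i⟩

theorem Matrix.IsHermitian.eigenvalues_sort_le_of_re_dotProduct_le {n : ℕ}
    {H B : Matrix (Fin n) (Fin n) ℂ} (hH : H.IsHermitian) (hB : B.PosSemidef)
    (hHB : ∀ x, (star x ⬝ᵥ H *ᵥ x).re ≤ ‖WithLp.toLp 2 x‖ * ‖WithLp.toLp 2 (B *ᵥ x)‖)
    (k : Fin n) :
    hH.eigenvalues (Tuple.sort hH.eigenvalues k)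
      ≤ hB.1.eigenvalues (Tuple.sort hB.1.eigenvalues k) := by
  set σ := Tuple.sort hH.eigenvalues
  set τ := Tuple.sort hB.1.eigenvalues
  -- fewer than `n` linear conditions: `k` from the eigenbasis of `H`, `n - 1 - k` from that of `B`
  obtain ⟨x, hx0, hx⟩ := exists_ne_zero_forall_eq_zero (K := ℂ) (V := Fin n → ℂ)
    (Sum.elim (fun i : {i // i < k} =>
        (LinearMap.proj (σ i)).comp (mulVecLin (star (hH.eigenvectorUnitary : Matrix _ _ ℂ))))
      (fun i : {i // k < i} =>
        (LinearMap.proj (τ i)).comp (mulVecLin (star (hB.1.eigenvectorUnitary : Matrix _ _ ℂ)))))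
    (by
      simp only [Fintype.card_sum, Fintype.card_subtype, Finset.filter_gt_eq_Iio,
        Finset.filter_lt_eq_Ioi, Fin.card_Iio, Fin.card_Ioi, Module.finrank_fin_fun]
      omega)
  have hlower : hH.eigenvalues (σ k) * ‖WithLp.toLp 2 x‖ ^ 2 ≤ (star x ⬝ᵥ H *ᵥ x).re :=
    hH.mul_norm_sq_le_re_dotProduct fun j hj => by
      obtain ⟨i, rfl⟩ := σ.surjective j
      exact hx (Sum.inl ⟨i, (Tuple.monotone_sort hH.eigenvalues).reflect_lt hj⟩)
  have hupper : ‖WithLp.toLp 2 (B *ᵥ x)‖ ≤ hB.1.eigenvalues (τ k) * ‖WithLp.toLp 2 x‖ :=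
    hB.1.norm_mulVec_le (hB.eigenvalues_nonneg _) fun j hj => by
      obtain ⟨i, rfl⟩ := τ.surjective j
      rw [abs_of_nonneg (hB.eigenvalues_nonneg _)] at hj
      exact hx (Sum.inr ⟨i, (Tuple.monotone_sort hB.1.eigenvalues).reflect_lt hj⟩)
  have hxpos : 0 < ‖WithLp.toLp 2 x‖ := norm_pos_iff.mpr (by simpa using hx0)
  refine le_of_mul_le_mul_right ?_ (pow_pos hxpos 2)
  calc hH.eigenvalues (σ k) * ‖WithLp.toLp 2 x‖ ^ 2
      ≤ ‖WithLp.toLp 2 x‖ * ‖WithLp.toLp 2 (B *ᵥ x)‖ := hlower.trans (hHB x)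
    _ ≤ ‖WithLp.toLp 2 x‖ * (hB.1.eigenvalues (τ k) * ‖WithLp.toLp 2 x‖) := by gcongr
    _ = hB.1.eigenvalues (τ k) * ‖WithLp.toLp 2 x‖ ^ 2 := by ring

section RealPart

theorem reM_isHermitian (A : Matrix m m ℂ) : (reM A).IsHermitian := by
  rw [reM, IsHermitian, conjTranspose_smul, conjTranspose_add, conjTranspose_conjTranspose,
    add_comm]
  congr 1
  simp

variable [Fintype m]

theorem dotProduct_reM_mulVec (A : Matrix m m ℂ) (x : m → ℂ) :
    star x ⬝ᵥ reM A *ᵥ x = ((star x ⬝ᵥ A *ᵥ x).re : ℂ) := by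
  have hconj : star x ⬝ᵥ Aᴴ *ᵥ x = star (star x ⬝ᵥ A *ᵥ x) := by
    rw [dotProduct_mulVec, ← star_mulVec, ← star_dotProduct_star, star_star]
  rw [reM, smul_mulVec, add_mulVec, dotProduct_smul, dotProduct_add, hconj, Complex.star_def,
    Complex.add_conj, smul_eq_mul]
  push_cast
  ring

theorem re_dotProduct_mulVec_nonneg_of_numRange {A : Matrix m m ℂ} (hA : ∀ z ∈ numRange A, 0 ≤ z.re)
    (x : m → ℂ) : 0 ≤ (star x ⬝ᵥ A *ᵥ x).re := by
  rcases eq_or_ne x 0 with rfl | hx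
  · simp
  set s := ‖WithLp.toLp 2 x‖
  have hs : 0 < s := norm_pos_iff.mpr (by simpa using hx)
  set y := ((s⁻¹ : ℝ) : ℂ) • x
  have hy : star y ⬝ᵥ y = 1 := by
    rw [dotProduct_star_self_eq_norm_sq, WithLp.toLp_smul, norm_smul, Complex.norm_real,
      Real.norm_eq_abs, abs_inv, abs_of_pos hs, inv_mul_cancel₀ hs.ne']
    simp
  have hxy : x = (s : ℂ) • y := by
    rw [smul_smul, ← Complex.ofReal_mul, mul_inv_cancel₀ hs.ne', Complex.ofReal_one, one_smul]
  have hyA := hA _ ⟨y, hy, rfl⟩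
  rw [hxy, star_smul, mulVec_smul, smul_dotProduct, dotProduct_smul]
  simp only [Complex.star_def, Complex.conj_ofReal, smul_eq_mul, Complex.re_ofReal_mul]
  positivity

theorem reM_posSemidef {A : Matrix m m ℂ} (hA : ∀ z ∈ numRange A, 0 ≤ z.re) :
    (reM A).PosSemidef :=
  PosSemidef.of_dotProduct_mulVec_nonneg (reM_isHermitian A) fun x => by
    rw [dotProduct_reM_mulVec, Complex.zero_le_real]
    exact re_dotProduct_mulVec_nonneg_of_numRange hA x

end RealPart

section Modulus

variable [Fintype m] [DecidableEq m]

theorem matAbs_mul_self (A : Matrix m m ℂ) : matAbs A * matAbs A = Aᴴ * A := by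
  have hP := posSemidef_conjTranspose_mul_self A
  set U := (hP.1.eigenvectorUnitary : Matrix m m ℂ)
  have hspec : Aᴴ * A = U * Matrix.diagonal (RCLike.ofReal ∘ hP.1.eigenvalues) * star U := by
    rw [← Unitary.conjStarAlgAut_apply (S := ℂ)]
    exact hP.1.spectral_theorem
  have hsqrt : ∀ i, ((√(hP.1.eigenvalues i) : ℝ) : ℂ) * √(hP.1.eigenvalues i)
      = hP.1.eigenvalues i := fun i => by
    rw [← Complex.ofReal_mul, Real.mul_self_sqrt (hP.eigenvalues_nonneg i)]
  rw [hspec, matAbs]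
  simp only [Matrix.mul_assoc]
  rw [← Matrix.mul_assoc (star U), mem_unitaryGroup_iff'.mp hP.1.eigenvectorUnitary.2,
    Matrix.one_mul, ← Matrix.mul_assoc (Matrix.diagonal _), diagonal_mul_diagonal]
  congr 3
  funext i
  exact hsqrt i

theorem re_dotProduct_reM_mulVec_le (A : Matrix m m ℂ) (x : m → ℂ) :
    (star x ⬝ᵥ reM A *ᵥ x).re ≤ ‖WithLp.toLp 2 x‖ * ‖WithLp.toLp 2 (matAbs A *ᵥ x)‖ := by
  rw [dotProduct_reM_mulVec, Complex.ofReal_re, norm_mulVec_eq_of_conjTranspose_mul_self_eq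
    (M' := A) (by rw [(matAbs_posSemidef A).1.eq, matAbs_mul_self])]
  exact re_dotProduct_le_norm_mul_norm x (A *ᵥ x)

end Modulus

theorem IsUnitarilyInvariant.matFun_eq {n : ℕ} {N : Matrix (Fin n) (Fin n) ℂ → ℝ}
    (hN : IsUnitarilyInvariant N) {H : Matrix (Fin n) (Fin n) ℂ} (hH : H.IsHermitian)
    (f : ℝ → ℝ) :
    N (matFun f H)
      = N (diagonal fun k => (f (hH.eigenvalues (Tuple.sort hH.eigenvalues k)) : ℂ)) := by
  rw [matFun, dif_pos hH, hN.conj hH.eigenvectorUnitary.2]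
  exact (hN.diagonal_comp_perm _ (fun i => (f (hH.eigenvalues i) : ℂ))).symm

theorem norm_matFun_re_le_abs_general {n : ℕ} (A : Matrix (Fin n) (Fin n) ℂ) (α : ℝ)
    (hA : numRange A ⊆ sector α)
    (f : ℝ → ℝ) (hf : ConcaveOn ℝ (Set.Ici 0) f) (hf0 : ∀ x : ℝ, 0 ≤ x → 0 ≤ f x)
    (N : Matrix (Fin n) (Fin n) ℂ → ℝ)
    (hadd : ∀ X Y, N (X + Y) ≤ N X + N Y)
    (hsmul : ∀ (c : ℂ) X, N (c • X) = ‖c‖ * N X)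
    (hui : ∀ X, ∀ U ∈ Matrix.unitaryGroup (Fin n) ℂ, ∀ V ∈ Matrix.unitaryGroup (Fin n) ℂ,
      N (U * X * V) = N X) :
    N (matFun f (reM A)) ≤ N (matFun f (matAbs A)) := by
  have hN : IsUnitarilyInvariant N := hui
  have hRe : (reM A).PosSemidef := reM_posSemidef fun z hz => (hA hz).1
  have hAbs : (matAbs A).PosSemidef := matAbs_posSemidef A
  rw [hN.matFun_eq hRe.1, hN.matFun_eq hAbs.1]
  exact hN.diagonal_mono hadd hsmul (fun k => hf0 _ (hRe.eigenvalues_nonneg _)) fun k =>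
    hf.monotoneOn_of_nonneg hf0 (hRe.eigenvalues_nonneg _) (hAbs.eigenvalues_nonneg _)
      (hRe.1.eigenvalues_sort_le_of_re_dotProduct_le hAbs (re_dotProduct_reM_mulVec_le A) k)

theorem norm_matFun_re_le_abs {n : ℕ} (A : Matrix (Fin n) (Fin n) ℂ) (α : ℝ)
    (hα₀ : 0 ≤ α) (hα₁ : α < Real.pi / 2) (hA : numRange A ⊆ sector α)
    (f : ℝ → ℝ) (hf : ConcaveOn ℝ (Set.Ici 0) f) (hf0 : ∀ x : ℝ, 0 ≤ x → 0 ≤ f x)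
    (N : Matrix (Fin n) (Fin n) ℂ → ℝ)
    (hadd : ∀ X Y, N (X + Y) ≤ N X + N Y)
    (hsmul : ∀ (c : ℂ) X, N (c • X) = ‖c‖ * N X)
    (hui : ∀ X, ∀ U ∈ Matrix.unitaryGroup (Fin n) ℂ, ∀ V ∈ Matrix.unitaryGroup (Fin n) ℂ,
      N (U * X * V) = N X) :
    N (matFun f (reM A)) ≤ N (matFun f (matAbs A)) :=
  norm_matFun_re_le_abs_general A α hA f hf hf0 N hadd hsmul hui
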